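/- (Substitution lemma for # and ♮.) For all λ-terms M and N and every variable x: M#[N♮/x] ↠Λ$ M[N/x]# and M♮[N♮/x] ↠Λ$ M[N/x]♮. -/

import Mathlib

namespace Shift0

/-! ### The calculus Λ$ (de Bruijn representation) -/

/-- Terms of Λ$: variables, λ-abstractions, freeze `$(M)`, application, thaw `S₀(M)`. -/
inductive Tm : Type
  | var : Nat → Tm
  | lam : Tm → Tm
  | freeze : Tm → Tm
  | app : Tm → Tm → Tm
  | thaw : Tm → Tm
  deriving DecidableEq

namespace Tm

/-- Values of Λ$: variables, abstractions and frozen terms. -/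
inductive IsValue : Tm → Prop
  | var (n : Nat) : IsValue (.var n)
  | lam (M : Tm) : IsValue (.lam M)
  | freeze (M : Tm) : IsValue (.freeze M)

/-- Nonvalues of Λ$: applications and thawed terms. -/
inductive IsNonvalue : Tm → Prop
  | app (M N : Tm) : IsNonvalue (.app M N)
  | thaw (M : Tm) : IsNonvalue (.thaw M)

/-- Boolean value test. -/
def isVal : Tm → Bool
  | .var _ => true
  | .lam _ => true
  | .freeze _ => true
  | .app _ _ => false
  | .thaw _ => false

/-- Lift (shift) the free de Bruijn variables `≥ d` up by one. -/
def lift (d : Nat) : Tm → Tm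
  | .var n => if n < d then .var n else .var (n+1)
  | .lam M => .lam (lift (d+1) M)
  | .freeze M => .freeze (lift d M)
  | .app M N => .app (lift d M) (lift d N)
  | .thaw M => .thaw (lift d M)

/-- Capture-avoiding substitution `M[N/x]` (for the de Bruijn variable `x`);
the variables above `x` are shifted down by one. -/
def subst : Tm → Nat → Tm → Tm
  | .var n, x, N => if n = x then N else if n < x then .var n else .var (n-1)
  | .lam M, x, N => .lam (subst M (x+1) (N.lift 0))
  | .freeze M, x, N => .freeze (subst M x N)
  | .app M L, x, N => .app (subst M x N) (subst L x N)
  | .thaw M, x, N => .thaw (subst M x N)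

/-- `M $ N` is sugar for `$(N) M`. -/
def dol (M N : Tm) : Tm := .app (.freeze N) M

/-- `let x = M in N` is sugar for `S₀k.((λx.(k $ N)) $ M)`;
here `N` has the let-bound variable as de Bruijn index `0`. -/
def letIn (M N : Tm) : Tm :=
  .thaw (.lam (dol (.lam (dol (.var 1) (N.lift 1))) (M.lift 0)))

end Tm

/-- Bindable contexts `J ::= [] M | V [] | S₀([])`. -/
inductive JCtx : Type
  | appL : Tm → JCtx
  | appR : Tm → JCtx
  | thaw : JCtx

namespace JCtx

/-- Well-formedness: in `V []` the term `V` must be a value. -/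
def Wf : JCtx → Prop
  | .appL _ => True
  | .appR V => V.IsValue
  | .thaw => True

/-- Plugging a term into a bindable context. -/
def plug : JCtx → Tm → Tm
  | .appL N, M => .app M N
  | .appR V, M => .app V M
  | .thaw, M => .thaw M

/-- Lift the free variables `≥ d` of a bindable context. -/
def lift (d : Nat) : JCtx → JCtx
  | .appL N => .appL (N.lift d)
  | .appR V => .appR (V.lift d)
  | .thaw => .thaw

end JCtx

/-- Pure contexts `K ::= [] | J[K]`, represented as a list of bindable
contexts (head outermost). -/
abbrev KCtx : Type := List JCtx

/-- Plugging a term into a pure context. -/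
def KCtx.plug : KCtx → Tm → Tm
  | [], M => M
  | (J :: K), M => J.plug (KCtx.plug K M)

/-- Well-formedness of a pure context. -/
def KCtx.Wf (K : KCtx) : Prop := ∀ J ∈ K, JCtx.Wf J

/-- Lift the free variables `≥ d` of a pure context. -/
def KCtx.lift (d : Nat) (K : KCtx) : KCtx := K.map (JCtx.lift d)

namespace Tm

/-- The basic contractions of Λ$. -/
inductive Contr : Tm → Tm → Prop
  | betav (M V : Tm) : V.IsValue → Contr (.app (.lam M) V) (M.subst 0 V)
  | etav (V : Tm) : V.IsValue → Contr (.lam (.app (V.lift 0) (.var 0))) V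
  | dolv (V : Tm) : V.IsValue → Contr (.freeze V) (.lam (.app (.var 0) (V.lift 0)))
  | dolsh (V : Tm) : V.IsValue → Contr (.freeze (.thaw V)) V
  | shdol (M : Tm) : Contr (.thaw (.freeze M)) M
  | pure (V : Tm) : V.IsValue → Contr (.thaw (.lam (.app (.var 0) (V.lift 0)))) V
  | bind (J : JCtx) (P : Tm) : J.Wf → P.IsNonvalue →
      Contr (J.plug P) (letIn P ((J.lift 0).plug (.var 0)))

/-- One-step reduction of Λ$: closure of the contractions under arbitrary
contexts (including under binders). -/
inductive Step : Tm → Tm → Prop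
  | contr {M N : Tm} : Contr M N → Step M N
  | lam {M N : Tm} : Step M N → Step (.lam M) (.lam N)
  | freeze {M N : Tm} : Step M N → Step (.freeze M) (.freeze N)
  | appL {M N L : Tm} : Step M N → Step (.app M L) (.app N L)
  | appR {M N L : Tm} : Step M N → Step (.app L M) (.app L N)
  | thaw {M N : Tm} : Step M N → Step (.thaw M) (.thaw N)

/-- Multi-step reduction `↠Λ$`. -/
def Steps : Tm → Tm → Prop := Relation.ReflTransGen Step

/-- Convertibility `=Λ$`: the equivalence generated by reduction. -/
def Equiv : Tm → Tm → Prop := Relation.EqvGen Step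

end Tm

/-! ### The pure λ-calculus with βη -/

/-- Terms of the pure λ-calculus. -/
inductive Lam : Type
  | var : Nat → Lam
  | lam : Lam → Lam
  | app : Lam → Lam → Lam
  deriving DecidableEq

namespace Lam

/-- Lift the free de Bruijn variables `≥ d` up by one. -/
def lift (d : Nat) : Lam → Lam
  | .var n => if n < d then .var n else .var (n+1)
  | .lam M => .lam (lift (d+1) M)
  | .app M N => .app (lift d M) (lift d N)

/-- Capture-avoiding substitution `M[N/x]`. -/
def subst : Lam → Nat → Lam → Lam
  | .var n, x, N => if n = x then N else if n < x then .var n else .var (n-1)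
  | .lam M, x, N => .lam (subst M (x+1) (N.lift 0))
  | .app M L, x, N => .app (subst M x N) (subst L x N)

/-- β and η contractions. -/
inductive Contr : Lam → Lam → Prop
  | beta (M N : Lam) : Contr (.app (.lam M) N) (M.subst 0 N)
  | eta (M : Lam) : Contr (.lam (.app (M.lift 0) (.var 0))) M

/-- One-step βη-reduction, closed under arbitrary contexts. -/
inductive Step : Lam → Lam → Prop
  | contr {M N : Lam} : Contr M N → Step M N
  | lam {M N : Lam} : Step M N → Step (.lam M) (.lam N)
  | appL {M N L : Lam} : Step M N → Step (.app M L) (.app N L)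
  | appR {M N L : Lam} : Step M N → Step (.app L M) (.app L N)

/-- Multi-step βη-reduction `↠λ`. -/
def Steps : Lam → Lam → Prop := Relation.ReflTransGen Step

/-- βη-convertibility `=λ`. -/
def Equiv : Lam → Lam → Prop := Relation.EqvGen Step

end Lam

end Shift0

namespace Shift0

/-! ### The CPS translation `* : Λ$ → λ` and its value part `†` -/

mutual

/-- The CPS translation `M*`.  It is the full unfolding of the equations
`V* = λk.k V†`, `J[P]* = λk.P* (λx.(J[x]* k))`, `(V W)* = V† W†` and
`(S₀(V))* = V†`. -/
def cps : Tm → Lam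
  | .var n => .lam (.app (.var 0) (.var (n+1)))
  | .lam M => .lam (.app (.var 0) ((Lam.lam (cps M)).lift 0))
  | .freeze M => .lam (.app (.var 0) ((cps M).lift 0))
  | .app M N =>
      if M.isVal then
        if N.isVal then .app (cpsV M) (cpsV N)
        else
          .lam (.app ((cps N).lift 0)
            (.lam (.app (.app (((cpsV M).lift 0).lift 0) (.var 0)) (.var 1))))
      else
        if N.isVal then
          .lam (.app ((cps M).lift 0)
            (.lam (.app (.app (.var 0) (((cpsV N).lift 0).lift 0)) (.var 1))))
        else
          .lam (.app ((cps M).lift 0)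
            (.lam (.app
              (.lam (.app ((((cps N).lift 0).lift 0).lift 0)
                (.lam (.app (.app (.var 2) (.var 0)) (.var 1)))))
              (.var 1))))
  | .thaw M =>
      if M.isVal then cpsV M
      else .lam (.app ((cps M).lift 0) (.lam (.app (.var 0) (.var 1))))

/-- The value part `V†` of the CPS translation (junk on nonvalues). -/
def cpsV : Tm → Lam
  | .var n => .var n
  | .lam M => .lam (cps M)
  | .freeze M => cps M
  | .app _ _ => .var 0
  | .thaw _ => .var 0

end

/-! ### The direct-style translation `# : λ → Λ$` and its auxiliary `♮` -/

namespace Lam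

/-- Does the de Bruijn variable `x` occur free in the term? -/
def hasVar (x : Nat) : Lam → Bool
  | .var n => n = x
  | .lam M => hasVar (x+1) M
  | .app M N => hasVar x M || hasVar x N

/-- Shift the free de Bruijn variables `> d` down by one
(inverse of `lift d` on terms not containing `d` free). -/
def lower (d : Nat) : Lam → Lam
  | .var n => if d < n then .var (n-1) else .var n
  | .lam M => .lam (lower (d+1) M)
  | .app M N => .app (lower d M) (lower d N)

/-- Size of a λ-term. -/
def size : Lam → Nat
  | .var _ => 1
  | .lam M => size M + 1
  | .app M N => size M + size N + 1

theorem size_lower (d : Nat) (M : Lam) : (lower d M).size = M.size := by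
  induction M generalizing d with
  | var n => simp only [lower]; split <;> rfl
  | lam M ih => simp [lower, size, ih]
  | app M N ihM ihN => simp [lower, size, ihM, ihN]

end Lam

mutual

/-- The direct-style translation `M#`; the case `(λx.x N)# = N♮` (with
`x ∉ FV(N)`) is rendered by checking that de Bruijn variable `0` does not
occur in `N` and lowering the remaining variables. -/
def ds : Lam → Tm
  | .var n => .thaw (.var n)
  | .app M N => .app (nat M) (nat N)
  | .lam (.app (.var 0) N) =>
      if N.hasVar 0 then .thaw (.lam (.app (.var 0) (nat N)))
      else nat (N.lower 0)
  | .lam M => .thaw (.lam (ds M))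
termination_by M => M.size
decreasing_by all_goals simp [Lam.size, Lam.size_lower] <;> omega

/-- The auxiliary direct-style translation `M♮`. -/
def nat : Lam → Tm
  | .var n => .var n
  | .lam M => .lam (ds M)
  | .app M N => .freeze (.app (nat M) (nat N))
termination_by M => M.size
decreasing_by all_goals simp [Lam.size, Lam.size_lower] <;> omega

end

end Shift0

namespace Shift0

/-! ### Materzok's calculus λ$ -/

/-- Terms of λ$: variables, abstractions, applications, `S₀x.e`
(the body is under a binder) and `e $ e'`. -/
inductive LTm : Type
  | var : Nat → LTm
  | lam : LTm → LTm
  | app : LTm → LTm → LTm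
  | shift : LTm → LTm
  | dollar : LTm → LTm → LTm
  deriving DecidableEq

namespace LTm

/-- Values of λ$: variables and abstractions. -/
inductive IsValue : LTm → Prop
  | var (n : Nat) : IsValue (.var n)
  | lam (e : LTm) : IsValue (.lam e)

/-- Lift the free de Bruijn variables `≥ d` up by one. -/
def lift (d : Nat) : LTm → LTm
  | .var n => if n < d then .var n else .var (n+1)
  | .lam e => .lam (lift (d+1) e)
  | .app e f => .app (lift d e) (lift d f)
  | .shift e => .shift (lift (d+1) e)
  | .dollar e f => .dollar (lift d e) (lift d f)

/-- Capture-avoiding substitution `e[v/x]`. -/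
def subst : LTm → Nat → LTm → LTm
  | .var n, x, N => if n = x then N else if n < x then .var n else .var (n-1)
  | .lam e, x, N => .lam (subst e (x+1) (N.lift 0))
  | .app e f, x, N => .app (subst e x N) (subst f x N)
  | .shift e, x, N => .shift (subst e (x+1) (N.lift 0))
  | .dollar e f, x, N => .dollar (subst e x N) (subst f x N)

end LTm

/-- Pure contexts of λ$: `E ::= [] | E e | v E | E $ e`. -/
inductive ECtx : Type
  | hole : ECtx
  | appL : ECtx → LTm → ECtx
  | appR : LTm → ECtx → ECtx
  | dolL : ECtx → LTm → ECtx

namespace ECtx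

/-- Well-formedness: in `v E` the term `v` must be a value. -/
def Wf : ECtx → Prop
  | .hole => True
  | .appL E _ => E.Wf
  | .appR v E => v.IsValue ∧ E.Wf
  | .dolL E _ => E.Wf

/-- Plugging a term into a pure context of λ$. -/
def plug : ECtx → LTm → LTm
  | .hole, e => e
  | .appL E f, e => .app (E.plug e) f
  | .appR v E, e => .app v (E.plug e)
  | .dolL E f, e => .dollar (E.plug e) f

/-- Lift the free variables `≥ d` of a pure context. -/
def lift (d : Nat) : ECtx → ECtx
  | .hole => .hole
  | .appL E f => .appL (E.lift d) (f.lift d)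
  | .appR v E => .appR (v.lift d) (E.lift d)
  | .dolL E f => .dolL (E.lift d) (f.lift d)

end ECtx

namespace LTm

/-- The axioms of λ$. -/
inductive Ax : LTm → LTm → Prop
  | betav (e v : LTm) : v.IsValue → Ax (.app (.lam e) v) (e.subst 0 v)
  | etav (v : LTm) : v.IsValue → Ax (.lam (.app (v.lift 0) (.var 0))) v
  | dolv (v w : LTm) : v.IsValue → w.IsValue → Ax (.dollar v w) (.app v w)
  | dolE (v : LTm) (E : ECtx) (e : LTm) : v.IsValue → E.Wf →
      Ax (.dollar v (E.plug e))
         (.dollar (.lam (.dollar (v.lift 0) ((E.lift 0).plug (.var 0)))) e)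
  | betad (v e : LTm) : v.IsValue → Ax (.dollar v (.shift e)) (e.subst 0 v)
  | etad (e : LTm) : Ax (.shift (.dollar (.var 0) (e.lift 0))) e

/-- The axioms applied in an arbitrary context. -/
inductive AStep : LTm → LTm → Prop
  | ax {e f : LTm} : Ax e f → AStep e f
  | lam {e f : LTm} : AStep e f → AStep (.lam e) (.lam f)
  | appL {e f g : LTm} : AStep e f → AStep (.app e g) (.app f g)
  | appR {e f g : LTm} : AStep e f → AStep (.app g e) (.app g f)
  | shift {e f : LTm} : AStep e f → AStep (.shift e) (.shift f)
  | dolL {e f g : LTm} : AStep e f → AStep (.dollar e g) (.dollar f g)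
  | dolR {e f g : LTm} : AStep e f → AStep (.dollar g e) (.dollar g f)

/-- The equational theory `=λ$` generated by the axioms. -/
def Equiv : LTm → LTm → Prop := Relation.EqvGen AStep

end LTm

/-- The embedding `ι : λ$ → Λ$`. -/
def iota : LTm → Tm
  | .var n => .var n
  | .lam e => .lam (iota e)
  | .app e f => .app (iota e) (iota f)
  | .shift e => .thaw (.lam (iota e))
  | .dollar e f => .app (.freeze (iota f)) (iota e)

/-- The translation `π : Λ$ → λ$`. -/
def pi : Tm → LTm
  | .var n => .var n
  | .lam M => .lam (pi M)
  | .freeze M => .lam (.dollar (.var 0) ((pi M).lift 0))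
  | .app M N => .app (pi M) (pi N)
  | .thaw M => .app (.lam (.shift (.app (.var 1) (.var 0)))) (pi M)

/-- Materzok's CPS translation `⟦·⟧ : λ$ → λ` (with the value translation
`⟪x⟫ = x`, `⟪λx.e⟫ = λx.⟦e⟧` inlined). -/
def mcps : LTm → Lam
  | .var n => .lam (.app (.var 0) (.var (n+1)))
  | .lam e => .lam (.app (.var 0) ((Lam.lam (mcps e)).lift 0))
  | .app e f => .lam (.app ((mcps e).lift 0)
      (.lam (.app (((mcps f).lift 0).lift 0)
        (.lam (.app (.app (.var 1) (.var 0)) (.var 2))))))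
  | .shift e => .lam (mcps e)
  | .dollar e f => .lam (.app ((mcps e).lift 0)
      (.lam (.app (.app (((mcps f).lift 0).lift 0) (.var 0)) (.var 1))))

end Shift0

/-! Both claims are proved together, by induction along the recursion of `#` and `♮`.
Substitution commutes with the translations on the nose except at the substituted variable,
where `x#[N♮/x] = S₀(N♮)` only reduces to `N#`: by `(S₀$)` if `N` is an application, by `(pure)`
if `N = λy.y L` with `y ∉ FV(L)`, and trivially otherwise. The special clause for `λy.y L` is
stable under substitution because `N`, lifted past `y`, neither creates nor destroys occurrences
of `y`. -/

namespace Shift0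

namespace Lam

theorem lift_lift_of_le {d e : Nat} (h : d ≤ e) (M : Lam) :
    lift d (lift e M) = lift (e+1) (lift d M) := by
  induction M generalizing d e with
  | var n => simp only [lift]; split_ifs <;> simp only [lift] <;> split_ifs <;> grind
  | lam M ih => simp only [lift, ih (Nat.succ_le_succ h)]
  | app M N ihM ihN => simp only [lift, ihM h, ihN h]

theorem lower_lift_self (e : Nat) (M : Lam) : lower e (lift e M) = M := by
  induction M generalizing e with
  | var n => simp only [lift]; split_ifs <;> simp only [lower] <;> split_ifs <;> grind
  | lam M ih => simp only [lift, lower, ih]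
  | app M N ihM ihN => simp only [lift, lower, ihM, ihN]

theorem lift_lower_self {e : Nat} {M : Lam} (h : hasVar e M = false) :
    lift e (lower e M) = M := by
  induction M generalizing e with
  | var n =>
    simp only [hasVar, decide_eq_false_iff_not] at h
    simp only [lower]; split_ifs <;> simp only [lift] <;> split_ifs <;> grind
  | lam M ih => exact congrArg Lam.lam (ih h)
  | app M N ihM ihN =>
    simp only [hasVar, Bool.or_eq_false_iff] at h
    simp only [lower, lift, ihM h.1, ihN h.2]

theorem hasVar_lift_of_lt {x d : Nat} (h : x < d) (M : Lam) :
    hasVar x (lift d M) = hasVar x M := by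
  induction M generalizing x d with
  | var n => simp only [lift]; split_ifs <;> grind [hasVar]
  | lam M ih => simp only [lift, hasVar, ih (Nat.succ_lt_succ h)]
  | app M N ihM ihN => simp only [lift, hasVar, ihM h, ihN h]

theorem hasVar_lift_self (e : Nat) (M : Lam) : hasVar e (lift e M) = false := by
  induction M generalizing e with
  | var n => simp only [lift]; split_ifs <;> simp only [hasVar, decide_eq_false_iff_not] <;> omega
  | lam M ih => simp only [lift, hasVar, ih]
  | app M N ihM ihN => simp only [lift, hasVar, ihM, ihN, Bool.or_self]

theorem lower_lift_succ {e d : Nat} (h : e ≤ d) {M : Lam} (hM : hasVar e M = false) :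
    lower e (lift (d+1) M) = lift d (lower e M) := by
  induction M generalizing e d with
  | var n =>
    simp only [hasVar, decide_eq_false_iff_not] at hM
    simp only [lift]; split_ifs <;> simp only [lower] <;> split_ifs <;>
      simp only [lift] <;> split_ifs <;> grind
  | lam M ih => exact congrArg Lam.lam (ih (Nat.succ_le_succ h) hM)
  | app M N ihM ihN =>
    simp only [hasVar, Bool.or_eq_false_iff] at hM
    simp only [lift, lower, ihM h hM.1, ihN h hM.2]

theorem hasVar_subst_lift {e x : Nat} (h : e ≤ x) (M N : Lam) :
    hasVar e (subst M (x+1) (lift e N)) = hasVar e M := by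
  induction M generalizing e x N with
  | var n =>
    simp only [subst]; split_ifs with h1
    · simp only [hasVar_lift_self, hasVar]; grind
    · rfl
    · simp only [hasVar, decide_eq_decide]; omega
  | lam M ih =>
    simp only [subst, hasVar, lift_lift_of_le (Nat.zero_le e) N]
    exact ih (Nat.succ_le_succ h) (N.lift 0)
  | app M L ihM ihL => simp only [subst, hasVar, ihM h, ihL h]

theorem lower_subst_lift {e x : Nat} (h : e ≤ x) {M : Lam} (N : Lam) (hM : hasVar e M = false) :
    lower e (subst M (x+1) (lift e N)) = subst (lower e M) x N := by
  induction M generalizing e x N with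
  | var n =>
    simp only [hasVar, decide_eq_false_iff_not] at hM
    simp only [subst]; split_ifs with h1
    · subst h1
      simp only [lower_lift_self, lower, if_pos (show e < x + 1 by omega), subst,
        Nat.add_sub_cancel, if_true]
    all_goals simp only [lower]; split_ifs <;> simp only [subst] <;> split_ifs <;> grind
  | lam M ih =>
    simp only [subst, lower, lift_lift_of_le (Nat.zero_le e) N]
    rw [ih (Nat.succ_le_succ h) (N.lift 0) hM]
  | app M L ihM ihL =>
    simp only [hasVar, Bool.or_eq_false_iff] at hM
    simp only [subst, lower, ihM h N hM.1, ihL h N hM.2]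

theorem lift_ne_of_hasVar {e : Nat} {L : Lam} (hL : hasVar e L = true) (N : Lam) :
    N.lift e ≠ L := fun h => by
  simp [← h, hasVar_lift_self] at hL

theorem lift_succ_ne_app_var_zero {M : Lam} (hM : ∀ L, M ≠ .app (.var 0) L) (d : Nat) :
    ∀ L, M.lift (d+1) ≠ .app (.var 0) L := by
  intro L hL
  cases M with
  | var n => simp only [lift] at hL; split_ifs at hL
  | lam M => cases hL
  | app X Y =>
    cases X with
    | var n =>
      simp only [lift] at hL
      split_ifs at hL with hn <;> simp only [app.injEq, var.injEq] at hL
      · exact hM Y (by rw [hL.1])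
      · omega
    | lam => cases hL
    | app => cases hL

theorem subst_lift_ne_app_var_zero {M : Lam} (hM : ∀ L, M ≠ .app (.var 0) L) (x : Nat) (N : Lam) :
    ∀ L, M.subst (x+1) (N.lift 0) ≠ .app (.var 0) L := by
  intro L hL
  cases M with
  | var n =>
    simp only [subst] at hL
    split_ifs at hL
    exact lift_ne_of_hasVar (by simp [hasVar]) N hL
  | lam M => cases hL
  | app X Y =>
    cases X with
    | var n =>
      simp only [subst] at hL
      split_ifs at hL with h1 h2 <;> simp only [app.injEq, var.injEq] at hL
      · exact lift_ne_of_hasVar (by simp [hasVar]) N hL.1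
      · exact hM Y (by rw [hL.1])
      · omega
    | lam => cases hL
    | app => cases hL

end Lam

namespace Tm.Steps

theorem lam {M N : Tm} (h : Steps M N) : Steps (.lam M) (.lam N) :=
  Relation.ReflTransGen.lift Tm.lam (fun _ _ => Step.lam) _ _ h

theorem thaw {M N : Tm} (h : Steps M N) : Steps (.thaw M) (.thaw N) :=
  Relation.ReflTransGen.lift Tm.thaw (fun _ _ => Step.thaw) _ _ h

theorem freeze {M N : Tm} (h : Steps M N) : Steps (.freeze M) (.freeze N) :=
  Relation.ReflTransGen.lift Tm.freeze (fun _ _ => Step.freeze) _ _ h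

theorem app {M M' N N' : Tm} (hM : Steps M M') (hN : Steps N N') :
    Steps (.app M N) (.app M' N') :=
  (hM.lift (fun t => Tm.app t N) fun _ _ => Step.appL).trans
    (hN.lift (Tm.app M') fun _ _ => Step.appR)

theorem of_contr {M N : Tm} (h : Contr M N) : Steps M N :=
  .single (.contr h)

end Tm.Steps

theorem nat_isValue (M : Lam) : (nat M).IsValue := by
  cases M <;> simp only [nat] <;> constructor

theorem ds_lam_app_var_zero_of_hasVar {L : Lam} (hL : L.hasVar 0 = true) :
    ds (.lam (.app (.var 0) L)) = .thaw (.lam (.app (.var 0) (nat L))) := by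
  rw [ds.eq_3, if_pos hL]

theorem ds_lam_app_var_zero_of_not_hasVar {L : Lam} (hL : ¬L.hasVar 0 = true) :
    ds (.lam (.app (.var 0) L)) = nat (L.lower 0) := by
  rw [ds.eq_3, if_neg hL]

theorem ds_lift_and_nat_lift :
    (∀ M d, ds (M.lift d) = (ds M).lift d) ∧ ∀ M d, nat (M.lift d) = (nat M).lift d := by
  refine ds.mutual_induct (fun M => ∀ d, ds (M.lift d) = (ds M).lift d)
    (fun M => ∀ d, nat (M.lift d) = (nat M).lift d)
    ?ds_var ?ds_app ?ds_lam_app_var_zero_hasVar ?ds_lam_app_var_zero_lower ?ds_lam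
    ?nat_var ?nat_lam ?nat_app
  case ds_var =>
    intro n d
    by_cases h : n < d <;> simp [Lam.lift, Tm.lift, ds, h]
  case ds_app =>
    intro M N ihM ihN d
    simp only [Lam.lift, ds, Tm.lift, ihM, ihN]
  case ds_lam_app_var_zero_hasVar =>
    intro L hL ih d
    have hL' : (L.lift (d+1)).hasVar 0 = true := by rwa [Lam.hasVar_lift_of_lt d.succ_pos]
    simp only [Lam.lift, if_pos d.succ_pos]
    rw [ds_lam_app_var_zero_of_hasVar hL, ds_lam_app_var_zero_of_hasVar hL', ih]
    simp [Tm.lift]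
  case ds_lam_app_var_zero_lower =>
    intro L hL ih d
    have hL' : ¬(L.lift (d+1)).hasVar 0 = true := by rwa [Lam.hasVar_lift_of_lt d.succ_pos]
    simp only [Lam.lift, if_pos d.succ_pos]
    rw [ds_lam_app_var_zero_of_not_hasVar hL, ds_lam_app_var_zero_of_not_hasVar hL',
      Lam.lower_lift_succ d.zero_le (by simpa using hL), ih]
  case ds_lam =>
    intro M hM ih d
    simp only [Lam.lift]
    rw [ds.eq_4 M hM, ds.eq_4 _ (Lam.lift_succ_ne_app_var_zero hM d), ih]
    rfl
  case nat_var =>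
    intro n d
    by_cases h : n < d <;> simp [Lam.lift, Tm.lift, nat, h]
  case nat_lam =>
    intro M ih d
    simp only [Lam.lift, nat, Tm.lift, ih]
  case nat_app =>
    intro M N ihM ihN d
    simp only [Lam.lift, nat, Tm.lift, ihM, ihN]

theorem nat_lift (M : Lam) (d : Nat) : nat (M.lift d) = (nat M).lift d :=
  ds_lift_and_nat_lift.2 M d

theorem thaw_lam_ds_steps_ds_lam (M : Lam) : Tm.Steps (.thaw (.lam (ds M))) (ds (.lam M)) := by
  by_cases hM : ∃ L, M = .app (.var 0) L
  · obtain ⟨L, rfl⟩ := hM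
    by_cases hL : L.hasVar 0 = true
    · rw [ds_lam_app_var_zero_of_hasVar hL]
      simp only [ds, nat]
      exact .refl
    · rw [ds_lam_app_var_zero_of_not_hasVar hL]
      have hlift : nat L = (nat (L.lower 0)).lift 0 := by
        rw [← nat_lift, Lam.lift_lower_self (by simpa using hL)]
      simp only [ds, nat, hlift]
      exact .of_contr (.pure _ (nat_isValue _))
  · push Not at hM
    rw [ds.eq_4 M hM]
    exact .refl

theorem thaw_nat_steps_ds (M : Lam) : Tm.Steps (.thaw (nat M)) (ds M) := by
  cases M with
  | var n => simp only [nat, ds]; exact .refl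
  | lam M => simp only [nat]; exact thaw_lam_ds_steps_ds_lam M
  | app M N => simp only [nat, ds]; exact .of_contr (.shdol _)

theorem subst_var_nat (n x : Nat) (N : Lam) :
    (Tm.var n).subst x (nat N) = nat ((Lam.var n).subst x N) := by
  simp only [Tm.subst, Lam.subst]; split_ifs <;> simp only [nat]

theorem subst_ds_nat_steps :
    (∀ M N x, Tm.Steps ((ds M).subst x (nat N)) (ds (M.subst x N))) ∧
    ∀ M N x, Tm.Steps ((nat M).subst x (nat N)) (nat (M.subst x N)) := by
  refine ds.mutual_induct (fun M => ∀ N x, Tm.Steps ((ds M).subst x (nat N)) (ds (M.subst x N)))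
    (fun M => ∀ N x, Tm.Steps ((nat M).subst x (nat N)) (nat (M.subst x N)))
    ?ds_var ?ds_app ?ds_lam_app_var_zero_hasVar ?ds_lam_app_var_zero_lower ?ds_lam
    ?nat_var ?nat_lam ?nat_app
  case ds_var =>
    intro n N x
    simp only [ds]
    rw [Tm.subst, subst_var_nat]
    exact thaw_nat_steps_ds _
  case ds_app =>
    intro M L ihM ihL N x
    simp only [ds, Lam.subst, Tm.subst]
    exact (ihM N x).app (ihL N x)
  case ds_lam_app_var_zero_hasVar =>
    intro L hL ih N x
    have hL' : (L.subst (x+1) (N.lift 0)).hasVar 0 = true := by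
      rwa [Lam.hasVar_subst_lift x.zero_le]
    simp only [Lam.subst, if_neg (Nat.succ_ne_zero x).symm, if_pos x.succ_pos]
    rw [ds_lam_app_var_zero_of_hasVar hL, ds_lam_app_var_zero_of_hasVar hL']
    simp only [Tm.subst, if_neg (Nat.succ_ne_zero x).symm, if_pos x.succ_pos, ← nat_lift]
    exact (Tm.Steps.app .refl (ih _ _)).lam.thaw
  case ds_lam_app_var_zero_lower =>
    intro L hL ih N x
    have hL' : ¬(L.subst (x+1) (N.lift 0)).hasVar 0 = true := by
      rwa [Lam.hasVar_subst_lift x.zero_le]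
    simp only [Lam.subst, if_neg (Nat.succ_ne_zero x).symm, if_pos x.succ_pos]
    rw [ds_lam_app_var_zero_of_not_hasVar hL, ds_lam_app_var_zero_of_not_hasVar hL',
      Lam.lower_subst_lift x.zero_le N (by simpa using hL)]
    exact ih N x
  case ds_lam =>
    intro M hM ih N x
    simp only [Lam.subst]
    rw [ds.eq_4 M hM, ds.eq_4 _ (Lam.subst_lift_ne_app_var_zero hM x N)]
    simp only [Tm.subst, ← nat_lift]
    exact (ih _ _).lam.thaw
  case nat_var =>
    intro n N x
    simp only [nat, subst_var_nat]
    exact .refl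
  case nat_lam =>
    intro M ih N x
    simp only [nat, Lam.subst, Tm.subst, ← nat_lift]
    exact (ih _ _).lam
  case nat_app =>
    intro M L ihM ihL N x
    simp only [nat, Lam.subst, Tm.subst]
    exact ((ihM N x).app (ihL N x)).freeze

/-- **Substitution lemma for `#` and `♮`.**  For all λ-terms `M`, `N` and
every variable `x`: `M#[N♮/x] ↠Λ$ M[N/x]#` and `M♮[N♮/x] ↠Λ$ M[N/x]♮`. -/
theorem ds_subst (M N : Lam) (x : Nat) :
    Tm.Steps ((ds M).subst x (nat N)) (ds (M.subst x N)) ∧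
    Tm.Steps ((nat M).subst x (nat N)) (nat (M.subst x N)) :=
  ⟨subst_ds_nat_steps.1 M N x, subst_ds_nat_steps.2 M N x⟩

end Shift0
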